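/- Let 𝒞 be a finite η-sparse family of dyadic rectangles in ℝ², all contained in an open set Ω. Then for every 1 ≤ p < ∞, ‖Σ_{R∈𝒞} χ_R‖_{L^p(ℝ²)} ≤ C(p,η) |Ω|^{1/p}. (John–Nirenberg lemma for sparse rectangle families.) -/

import Mathlib

/-!
Write `F = ∑_{R ∈ 𝒞} χ_R`, fix `s > 1` with dual exponent `q`, and put `g = F^(s-1)`, so that
`F^s = g F`. Sparseness and the disjointness of the sets `E_R` give
`∫ F^s = ∑_R ∫_R g ≤ η⁻¹ ∑_R ⟨g⟩_R |E_R| ≤ η⁻¹ ∫_Ω M g`, where `M` is the strong dyadic maximal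
function. By Hölder and the `L^q` bound for `M`, the right side is at most
`η⁻¹ ‖M‖ (∫ F^s)^(1/q) |Ω|^(1/s)`, and since `∫ F^s` is finite this yields `∫ F^s ≤ C |Ω|`.
Since `F` is integer valued, `F^p ≤ F^(2p)`, so taking `s = 2p` covers every `p ≥ 1`.

`M` is dominated by the composition of the one-parameter dyadic maximal functions in the two
variables. Each of these is of weak type (1,1), because the maximal dyadic intervals on which
the average of `f` exceeds `t` are disjoint; it is trivially bounded on `L^∞`, so the layer-cake
formula (Marcinkiewicz interpolation) bounds it on `L^q`.
-/

open MeasureTheory Set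
open scoped ENNReal Classical

noncomputable section

/-- The dyadic interval `[n·2^k, (n+1)·2^k)`, indexed by `p = (k, n)`. -/
def dyadicI (p : ℤ × ℤ) : Set ℝ := Set.Ico ((p.2 : ℝ) * 2 ^ p.1) ((p.2 + 1 : ℝ) * 2 ^ p.1)

/-- The length `|I| = 2^k` of the dyadic interval indexed by `p = (k, n)`. -/
def dlen (p : ℤ × ℤ) : ℝ := (2 : ℝ) ^ p.1

/-- The `L²`-normalized Haar function of the dyadic interval indexed by `p = (k, n)`. -/
def haar (p : ℤ × ℤ) (x : ℝ) : ℝ :=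
  (2 : ℝ) ^ (-(p.1 : ℝ) / 2) *
    ((dyadicI (p.1 - 1, 2 * p.2)).indicator 1 x - (dyadicI (p.1 - 1, 2 * p.2 + 1)).indicator 1 x)

/-- The normalized indicator `χ_I/|I|`. -/
def nind (p : ℤ × ℤ) (x : ℝ) : ℝ := (dlen p)⁻¹ * (dyadicI p).indicator 1 x

/-- Index of a dyadic rectangle `R = I × J`. -/
abbrev RectIx : Type := (ℤ × ℤ) × (ℤ × ℤ)

/-- The dyadic rectangle `I × J`. -/
def dyadicR (r : RectIx) : Set (ℝ × ℝ) := (dyadicI r.1) ×ˢ (dyadicI r.2)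

/-- The area `|R| = |I|·|J|`. -/
def rlen (r : RectIx) : ℝ := dlen r.1 * dlen r.2

/-- The rectangular Haar function `h_R = h_I ⊗ h_J`. -/
def haarR (r : RectIx) (z : ℝ × ℝ) : ℝ := haar r.1 z.1 * haar r.2 z.2

/-- The rectangular Haar coefficient `f_R = ⟨f, h_R⟩`. -/
def haarCoefR (f : ℝ × ℝ → ℝ) (r : RectIx) : ℝ := ∫ z : ℝ × ℝ, f z * haarR r z

/-- The average of `g` over the dyadic rectangle `R`. -/
def avgR (g : ℝ × ℝ → ℝ) (r : RectIx) : ℝ := (rlen r)⁻¹ * ∫ z in dyadicR r, g z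

/-- The average of `u` over the dyadic interval `I`. -/
def avgI (u : ℝ → ℝ) (p : ℤ × ℤ) : ℝ := (dlen p)⁻¹ * ∫ x in dyadicI p, u x

/-- The Haar coefficient in the second variable, `f_J(x) = ⟨f(x,·), h_J⟩`. -/
def coefSnd (f : ℝ × ℝ → ℝ) (q : ℤ × ℤ) (x : ℝ) : ℝ := ∫ y : ℝ, f (x, y) * haar q y

/-- The Haar coefficient in the first variable, `f_I(y) = ⟨f(·,y), h_I⟩`. -/
def coefFst (f : ℝ × ℝ → ℝ) (p : ℤ × ℤ) (y : ℝ) : ℝ := ∫ x : ℝ, f (x, y) * haar p x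

/-- The bi-parameter dyadic square function. -/
def sqR (f : ℝ × ℝ → ℝ) (z : ℝ × ℝ) : ℝ :=
  Real.sqrt (∑' r : RectIx, (haarCoefR f r) ^ 2 * (rlen r)⁻¹ * (dyadicR r).indicator 1 z)

/-- The strong dyadic maximal function. -/
def strongMax (g : ℝ × ℝ → ℝ) (z : ℝ × ℝ) : ℝ :=
  ⨆ r : {r : RectIx // z ∈ dyadicR r}, |avgR g r.1|

/-- The one-parameter dyadic maximal function. -/
def dyadMax (u : ℝ → ℝ) (x : ℝ) : ℝ := ⨆ p : {p : ℤ × ℤ // x ∈ dyadicI p}, |avgI u p.1|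

/-- `f` is a finite linear combination of indicators of dyadic intervals. -/
def IsDyadicSimple (f : ℝ → ℝ) : Prop :=
  ∃ (s : Finset (ℤ × ℤ)) (c : ℤ × ℤ → ℝ),
    f = fun x => ∑ p ∈ s, c p * (dyadicI p).indicator 1 x

/-- `g` is a finite linear combination of indicators of dyadic rectangles. -/
def IsDyadicSimple2 (g : ℝ × ℝ → ℝ) : Prop :=
  ∃ (s : Finset RectIx) (c : RectIx → ℝ),
    g = fun z => ∑ r ∈ s, c r * (dyadicR r).indicator 1 z

/-- `f` is a finite linear combination of rectangular Haar functions. -/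
def FinHaar2 (f : ℝ × ℝ → ℝ) : Prop :=
  ∃ (s : Finset RectIx) (c : RectIx → ℝ), f = fun z => ∑ r ∈ s, c r * haarR r z

/-- The paraproduct `π²_g(f) = Σ_R f_R ⟨g⟩_R h_R`. -/
def pi2 (g f : ℝ × ℝ → ℝ) (z : ℝ × ℝ) : ℝ :=
  ∑' r : RectIx, haarCoefR f r * avgR g r * haarR r z

/-- The mixed paraproduct `π³_g(f) = Σ_{I,J} ⟨f_J⟩_I ⟨g_I⟩_J h_I ⊗ h_J`. -/
def pi3 (g f : ℝ × ℝ → ℝ) (z : ℝ × ℝ) : ℝ :=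
  ∑' r : RectIx, avgI (coefSnd f r.2) r.1 * avgI (coefFst g r.1) r.2 * haarR r z

/-- The mixed paraproduct `π⁴_g(f) = Σ_{I,J} ⟨f_J⟩_I g_{I×J} h_I ⊗ χ̄_J`. -/
def pi4 (g f : ℝ × ℝ → ℝ) (z : ℝ × ℝ) : ℝ :=
  ∑' r : RectIx, avgI (coefSnd f r.2) r.1 * haarCoefR g r * haar r.1 z.1 * nind r.2 z.2

/-- The mixed square-maximal operator `S₂M₁`. -/
def S2M1 (f : ℝ × ℝ → ℝ) (z : ℝ × ℝ) : ℝ :=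
  Real.sqrt (∑' q : ℤ × ℤ,
    (dyadMax (coefSnd f q) z.1) ^ 2 * (dlen q)⁻¹ * (dyadicI q).indicator 1 z.2)

/-- The mixed maximal-square operator `M₂S₁`. -/
def M2S1 (g : ℝ × ℝ → ℝ) (z : ℝ × ℝ) : ℝ :=
  ⨆ q : {q : ℤ × ℤ // z.2 ∈ dyadicI q},
    Real.sqrt (∑' p : ℤ × ℤ,
      (avgI (coefFst g p) q.1) ^ 2 * (dlen p)⁻¹ * (dyadicI p).indicator 1 z.1)

/-- The mixed maximal-square operator `M₁S₂`. -/
def M1S2 (f : ℝ × ℝ → ℝ) (z : ℝ × ℝ) : ℝ :=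
  ⨆ p : {p : ℤ × ℤ // z.1 ∈ dyadicI p},
    Real.sqrt (∑' q : ℤ × ℤ,
      (avgI (coefSnd f q) p.1) ^ 2 * (dlen q)⁻¹ * (dyadicI q).indicator 1 z.2)

/-- The `H^p_d(ℝ⊗ℝ)` quasi-norm `‖M(f)‖_{L^p}`. -/
def hpNorm (p : ℝ) (f : ℝ × ℝ → ℝ) : ℝ≥0∞ :=
  eLpNorm (strongMax f) (ENNReal.ofReal p) volume

lemma mem_dyadicI_iff {x : ℝ} {p : ℤ × ℤ} : x ∈ dyadicI p ↔ ⌊x / 2 ^ p.1⌋ = p.2 := by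
  have h : (0 : ℝ) < 2 ^ p.1 := zpow_pos two_pos _
  rw [Int.floor_eq_iff, dyadicI, mem_Ico, le_div_iff₀ h, div_lt_iff₀ h]

lemma floor_div_two_zpow_of_le {k l : ℤ} (hkl : k ≤ l) (x : ℝ) :
    ⌊x / 2 ^ l⌋ = ⌊x / 2 ^ k⌋ / (2 ^ (l - k).toNat : ℕ) := by
  rw [← Int.floor_div_natCast, div_div, Nat.cast_pow, Nat.cast_ofNat, ← zpow_natCast,
    ← zpow_add₀ two_ne_zero, Int.toNat_of_nonneg (sub_nonneg.2 hkl), add_sub_cancel]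

lemma dyadicI_subset_of_mem {p q : ℤ × ℤ} (hpq : p.1 ≤ q.1) {x : ℝ} (hxp : x ∈ dyadicI p)
    (hxq : x ∈ dyadicI q) : dyadicI p ⊆ dyadicI q := by
  intro y hy
  rw [mem_dyadicI_iff] at hxp hxq hy ⊢
  rw [floor_div_two_zpow_of_le hpq, hy, ← hxp, ← floor_div_two_zpow_of_le hpq, hxq]

lemma eq_of_mem_dyadicI {p q : ℤ × ℤ} (h : p.1 = q.1) {x : ℝ} (hxp : x ∈ dyadicI p)
    (hxq : x ∈ dyadicI q) : p = q := by
  rw [mem_dyadicI_iff] at hxp hxq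
  exact Prod.ext h (by rw [← hxp, ← hxq, h])

lemma volume_dyadicI (p : ℤ × ℤ) : volume (dyadicI p) = ENNReal.ofReal (dlen p) := by
  rw [dyadicI, Real.volume_Ico, dlen]
  ring_nf

lemma volume_dyadicR (r : RectIx) : volume (dyadicR r) = ENNReal.ofReal (rlen r) := by
  have h : 0 ≤ dlen r.1 := (zpow_pos two_pos _).le
  rw [dyadicR, Measure.volume_eq_prod, Measure.prod_prod, volume_dyadicI, volume_dyadicI, rlen,
    ENNReal.ofReal_mul h]

lemma measurableSet_dyadicR (r : RectIx) : MeasurableSet (dyadicR r) :=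
  measurableSet_Ico.prod measurableSet_Ico

/-- Over `dyadicR` this is the strong dyadic maximal function `strongMax`, but `ℝ≥0∞`-valued,
so that the supremum carries no junk values. -/
def maximalFunction {α ι : Type*} [MeasurableSpace α] (μ : Measure α) (S : ι → Set α)
    (f : α → ℝ≥0∞) (x : α) : ℝ≥0∞ :=
  ⨆ (i) (_ : x ∈ S i), ⨍⁻ y in S i, f y ∂μ

def MaximalWeakTypeOneOne {α ι : Type*} [MeasurableSpace α] (μ : Measure α) (S : ι → Set α) :
    Prop :=
  ∀ (f : α → ℝ≥0∞) (t : ℝ≥0∞), t * μ {x | t < maximalFunction μ S f x} ≤ ∫⁻ x, f x ∂μ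

section MaximalFunction

variable {α ι : Type*} [MeasurableSpace α] {μ : Measure α} {S : ι → Set α} {f g : α → ℝ≥0∞}

lemma setLAverage_le_maximalFunction {x : α} {i : ι} (hx : x ∈ S i) :
    ⨍⁻ y in S i, f y ∂μ ≤ maximalFunction μ S f x :=
  le_iSup₂ (f := fun i (_ : x ∈ S i) => ⨍⁻ y in S i, f y ∂μ) i hx

lemma lt_maximalFunction_iff {x : α} {t : ℝ≥0∞} :
    t < maximalFunction μ S f x ↔ ∃ i, x ∈ S i ∧ t < ⨍⁻ y in S i, f y ∂μ := by
  simp only [maximalFunction, lt_iSup_iff, exists_prop]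

lemma maximalFunction_mono (h : f ≤ g) : maximalFunction μ S f ≤ maximalFunction μ S g :=
  fun _ => iSup₂_mono fun i _ => setLAverage_mono_ae (S i) (ae_of_all _ h)

lemma maximalFunction_le_of_le {c : ℝ≥0∞} (h : ∀ y, f y ≤ c) (x : α) :
    maximalFunction μ S f x ≤ c :=
  iSup₂_le fun i _ => (setLAverage_le_essSup _ _).trans (essSup_le_of_ae_le c (ae_of_all _ h))

lemma maximalFunction_le_add_const {c : ℝ≥0∞} (h : ∀ y, f y ≤ g y + c) (x : α) :
    maximalFunction μ S f x ≤ maximalFunction μ S g x + c := by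
  refine iSup₂_le fun i hx => ?_
  calc ⨍⁻ y in S i, f y ∂μ ≤ ⨍⁻ y in S i, (g y + c) ∂μ := setLAverage_mono_ae _ (ae_of_all _ h)
    _ ≤ ⨍⁻ y in S i, g y ∂μ + c := by
        rw [setLAverage_eq, setLAverage_eq, lintegral_add_right _ measurable_const, ENNReal.add_div,
          setLIntegral_const]
        gcongr
        rw [mul_div_assoc]
        exact mul_le_of_le_one_right' ENNReal.div_self_le_one
    _ ≤ maximalFunction μ S g x + c := by gcongr; exact setLAverage_le_maximalFunction hx

lemma maximalFunction_eq_iSup_indicator (x : α) :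
    maximalFunction μ S f x = ⨆ i, (S i).indicator (fun _ => ⨍⁻ y in S i, f y ∂μ) x := by
  simp only [maximalFunction, Set.indicator_apply, iSup_eq_if, bot_eq_zero]

lemma measurable_maximalFunction [Countable ι] (hS : ∀ i, MeasurableSet (S i)) :
    Measurable (maximalFunction μ S f) := by
  simp only [funext maximalFunction_eq_iSup_indicator]
  exact .iSup fun i => measurable_const.indicator (hS i)

lemma measurable_maximalFunction_prodMk_left {β : Type*} [MeasurableSpace β] {ν : Measure β}
    [SFinite ν] {S : ι → Set β} [Countable ι] (hS : ∀ i, MeasurableSet (S i))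
    {u : α × β → ℝ≥0∞} (hu : Measurable u) :
    Measurable fun z : α × β => maximalFunction ν S (fun y => u (z.1, y)) z.2 := by
  simp only [maximalFunction_eq_iSup_indicator, Set.indicator_apply, setLAverage_eq]
  refine .iSup fun i => Measurable.ite ((hS i).preimage measurable_snd) ?_ measurable_const
  exact ((hu.lintegral_prod_right' (ν := ν.restrict (S i))).div_const _).comp measurable_fst

lemma maximalFunction_eq_iSup_min (hf : Measurable f) (x : α) :
    maximalFunction μ S f x = ⨆ n : ℕ, maximalFunction μ S (fun y => min (f y) n) x := by
  have hmin : ∀ s, ⨍⁻ y in s, f y ∂μ = ⨆ n : ℕ, ⨍⁻ y in s, min (f y) n ∂μ := fun s => by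
    simp only [setLAverage_eq]
    rw [← ENNReal.iSup_div, ← lintegral_iSup (fun n => hf.min measurable_const)
      fun m n hmn y => min_le_min_left _ (Nat.cast_le.2 hmn)]
    simp only [← inf_iSup_eq, ENNReal.iSup_natCast, inf_top_eq]
  simp only [maximalFunction, hmin]
  rw [iSup_comm]
  simp only [iSup_comm (ι := ℕ)]

end MaximalFunction

lemma exists_fst_le_of_volume_dyadicI_le {c : ℝ≥0∞} (hc : c ≠ ⊤) :
    ∃ N : ℤ, ∀ p, volume (dyadicI p) ≤ c → p.1 ≤ N := by
  obtain ⟨N, hN⟩ := pow_unbounded_of_one_lt c.toReal one_lt_two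
  refine ⟨N, fun p hp => ?_⟩
  rw [volume_dyadicI, ENNReal.ofReal_le_iff_le_toReal hc] at hp
  rw [← zpow_le_zpow_iff_right₀ (one_lt_two (α := ℝ)), zpow_natCast]
  exact hp.trans hN.le

/-- The stopping intervals of the Calderón–Zygmund decomposition relative to `B`. -/
def maximalDyadic (B : Set (ℤ × ℤ)) : Set (ℤ × ℤ) :=
  {p ∈ B | ∀ q ∈ B, dyadicI p ⊆ dyadicI q → q.1 ≤ p.1}

lemma pairwiseDisjoint_maximalDyadic (B : Set (ℤ × ℤ)) :
    (maximalDyadic B).PairwiseDisjoint dyadicI := by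
  have key : ∀ p ∈ maximalDyadic B, ∀ q ∈ maximalDyadic B, p.1 ≤ q.1 →
      ∀ x ∈ dyadicI p, x ∈ dyadicI q → p = q := fun p hp q hq hpq x hxp hxq =>
    eq_of_mem_dyadicI (le_antisymm hpq (hp.2 q hq.1 (dyadicI_subset_of_mem hpq hxp hxq))) hxp hxq
  intro p hp q hq hne
  refine Set.disjoint_left.2 fun x hxp hxq => hne ?_
  rcases le_total p.1 q.1 with h | h
  exacts [key p hp q hq h x hxp hxq, (key q hq p hp h x hxq hxp).symm]

lemma biUnion_subset_biUnion_maximalDyadic {B : Set (ℤ × ℤ)} {N : ℤ} (hN : ∀ p ∈ B, p.1 ≤ N) :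
    ⋃ p ∈ B, dyadicI p ⊆ ⋃ p ∈ maximalDyadic B, dyadicI p := by
  intro x hx
  obtain ⟨p, hp, hxp⟩ := mem_iUnion₂.1 hx
  obtain ⟨k, ⟨n, hkn, hxk⟩, hmax⟩ :=
    Int.exists_greatest_of_bdd (P := fun k => ∃ n, (k, n) ∈ B ∧ x ∈ dyadicI (k, n))
      ⟨N, fun k ⟨n, hn, _⟩ => hN _ hn⟩ ⟨p.1, p.2, hp, hxp⟩
  exact mem_biUnion ⟨hkn, fun q hq hsub => hmax q.1 ⟨q.2, hq, hsub hxk⟩⟩ hxk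

theorem maximalWeakTypeOneOne_dyadicI : MaximalWeakTypeOneOne volume dyadicI := by
  intro f t
  rcases eq_or_ne (∫⁻ x, f x) ⊤ with hf | hf
  · rw [hf]; exact le_top
  rcases eq_or_ne t 0 with rfl | ht
  · simp
  set B := {p : ℤ × ℤ | t < ⨍⁻ x in dyadicI p, f x ∂volume}
  have hB : ∀ p ∈ B, t * volume (dyadicI p) ≤ ∫⁻ x in dyadicI p, f x := fun p hp =>
    ENNReal.mul_le_of_le_div (by rw [← setLAverage_eq]; exact hp.le)
  obtain ⟨N, hN⟩ := exists_fst_le_of_volume_dyadicI_le (ENNReal.div_ne_top hf ht)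
  have hcover : {x | t < maximalFunction volume dyadicI f x} ⊆ ⋃ p ∈ B, dyadicI p :=
    fun x hx => by
      obtain ⟨p, hxp, hp⟩ := lt_maximalFunction_iff.1 hx
      exact mem_biUnion hp hxp
  have hdisj := pairwiseDisjoint_maximalDyadic B
  calc t * volume {x | t < maximalFunction volume dyadicI f x}
      ≤ t * volume (⋃ p ∈ maximalDyadic B, dyadicI p) := by
        gcongr
        refine hcover.trans (biUnion_subset_biUnion_maximalDyadic fun p hp => hN p ?_)
        rw [ENNReal.le_div_iff_mul_le (Or.inl ht) (Or.inr hf), mul_comm]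
        exact (hB p hp).trans (setLIntegral_le_lintegral _ _)
    _ = ∑' p : maximalDyadic B, t * volume (dyadicI p) := by
        rw [measure_biUnion (to_countable _) hdisj fun _ _ => measurableSet_Ico,
          ENNReal.tsum_mul_left]
    _ ≤ ∑' p : maximalDyadic B, ∫⁻ x in dyadicI p, f x :=
        ENNReal.tsum_le_tsum fun p => hB p p.2.1
    _ = ∫⁻ x in ⋃ p ∈ maximalDyadic B, dyadicI p, f x :=
        (lintegral_biUnion (to_countable _) (fun _ _ => measurableSet_Ico) hdisj f).symm
    _ ≤ ∫⁻ x, f x := setLIntegral_le_lintegral _ _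

lemma lintegral_Ioo_rpow {r b : ℝ} (hr : -1 < r) (hb : 0 ≤ b) :
    ∫⁻ t in Ioo 0 b, ENNReal.ofReal (t ^ r) = ENNReal.ofReal (b ^ (r + 1) / (r + 1)) := by
  have hint : IntegrableOn (fun t : ℝ => t ^ r) (Ioc 0 b) :=
    (intervalIntegral.intervalIntegrable_rpow' hr).1
  have hnonneg : 0 ≤ᵐ[volume.restrict (Ioc 0 b)] fun t : ℝ => t ^ r :=
    (ae_restrict_iff' measurableSet_Ioc).2 (ae_of_all _ fun t ht => Real.rpow_nonneg ht.1.le r)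
  rw [Measure.restrict_congr_set Ioo_ae_eq_Ioc, ← ofReal_integral_eq_lintegral_ofReal hint hnonneg,
    ← intervalIntegral.integral_of_le hb, integral_rpow (Or.inl hr),
    Real.zero_rpow (by linarith), sub_zero]

lemma lintegral_Ioi_ite_mul_rpow {q : ℝ} (hq : 1 < q) {a : ℝ≥0∞} (ha : a ≠ ⊤) :
    ∫⁻ t in Ioi 0, (if ENNReal.ofReal (t / 2) < a then a else 0) * ENNReal.ofReal (2 * t ^ (q - 2))
      = ENNReal.ofReal (2 ^ q / (q - 1)) * a ^ q := by
  obtain ⟨b, hb, rfl⟩ : ∃ b : ℝ, 0 ≤ b ∧ ENNReal.ofReal b = a :=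
    ⟨a.toReal, ENNReal.toReal_nonneg, ENNReal.ofReal_toReal ha⟩
  have hcond : ∀ t ∈ Ioi (0 : ℝ),
      (if ENNReal.ofReal (t / 2) < ENNReal.ofReal b then ENNReal.ofReal b else 0) *
        ENNReal.ofReal (2 * t ^ (q - 2)) =
      (Iio (2 * b)).indicator (fun t => ENNReal.ofReal b * ENNReal.ofReal (2 * t ^ (q - 2))) t := by
    intro t (ht : 0 < t)
    have hiff : ENNReal.ofReal (t / 2) < ENNReal.ofReal b ↔ t < 2 * b := by
      rw [ENNReal.ofReal_lt_ofReal_iff']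
      exact ⟨fun h => by linarith [h.1], fun h => ⟨by linarith, by linarith⟩⟩
    simp only [indicator_apply, mem_Iio, hiff, ite_mul, zero_mul]
  rw [setLIntegral_congr_fun measurableSet_Ioi hcond, lintegral_indicator measurableSet_Iio,
    Measure.restrict_restrict measurableSet_Iio, Iio_inter_Ioi,
    lintegral_const_mul' _ _ ENNReal.ofReal_ne_top]
  simp_rw [ENNReal.ofReal_mul (zero_le_two : (0 : ℝ) ≤ 2)]
  rw [lintegral_const_mul' _ _ ENNReal.ofReal_ne_top,
    lintegral_Ioo_rpow (by linarith) (by linarith),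
    ← ENNReal.ofReal_mul zero_le_two, ← ENNReal.ofReal_mul hb,
    ENNReal.ofReal_rpow_of_nonneg hb (by linarith),
    ← ENNReal.ofReal_mul (div_nonneg (by positivity) (by linarith))]
  congr 1
  have h2 : (2 : ℝ) ^ q = 2 * 2 ^ (q - 1) := by
    rw [← Real.rpow_one_add' zero_le_two (by linarith), add_sub_cancel]
  have hb' : b ^ q = b * b ^ (q - 1) := by
    rw [← Real.rpow_one_add' hb (by linarith), add_sub_cancel]
  rw [show q - 2 + 1 = q - 1 by ring, Real.mul_rpow zero_le_two hb, h2, hb']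
  ring

section Marcinkiewicz

variable {α ι : Type*} [MeasurableSpace α] {μ : Measure α} {S : ι → Set α} {f : α → ℝ≥0∞}

lemma mul_measure_lt_maximalFunction_le
    (hweak : MaximalWeakTypeOneOne μ S)
    (hf : Measurable f) (t : ℝ≥0∞) :
    t * μ {x | 2 * t < maximalFunction μ S f x} ≤ ∫⁻ x in {y | t < f y}, f x ∂μ := by
  set v := {y | t < f y}.indicator f
  have hfv : ∀ y, f y ≤ v y + t := fun y => by
    by_cases h : t < f y
    · simp [v, h]
    · simpa [v, h] using not_lt.1 h
  have hsub : {x | 2 * t < maximalFunction μ S f x} ⊆ {x | t < maximalFunction μ S v x} :=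
    fun x hx => by
      by_contra h
      refine (not_le.2 hx) ((maximalFunction_le_add_const hfv x).trans ?_)
      rw [two_mul]
      exact add_le_add_left (not_lt.1 h) t
  calc t * μ {x | 2 * t < maximalFunction μ S f x}
      ≤ t * μ {x | t < maximalFunction μ S v x} := by gcongr
    _ ≤ ∫⁻ x, v x ∂μ := hweak v t
    _ = ∫⁻ x in {y | t < f y}, f x ∂μ :=
        lintegral_indicator (measurableSet_lt measurable_const hf) f

lemma measure_lt_toReal_maximalFunction_mul_le
    (hweak : MaximalWeakTypeOneOne μ S)
    (hf : Measurable f) (q : ℝ) {t : ℝ} (ht : 0 < t) :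
    μ {x | t < (maximalFunction μ S f x).toReal} * ENNReal.ofReal (t ^ (q - 1)) ≤
      ∫⁻ x, (if ENNReal.ofReal (t / 2) < f x then f x else 0) *
        ENNReal.ofReal (2 * t ^ (q - 2)) ∂μ := by
  have hsub : {x | t < (maximalFunction μ S f x).toReal} ⊆
      {x | 2 * ENNReal.ofReal (t / 2) < maximalFunction μ S f x} := fun x hx => by
    rw [mem_ofPred_eq, ← ENNReal.ofReal_ofNat 2, ← ENNReal.ofReal_mul zero_le_two,
      mul_div_cancel₀ _ two_ne_zero, ENNReal.ofReal_lt_iff_lt_toReal ht.le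
        (ENNReal.toReal_pos_iff.1 (ht.trans hx)).2.ne]
    exact hx
  have hsplit : ENNReal.ofReal (t ^ (q - 1)) =
      ENNReal.ofReal (t / 2) * ENNReal.ofReal (2 * t ^ (q - 2)) := by
    rw [← ENNReal.ofReal_mul (by positivity), show q - 1 = 1 + (q - 2) by ring,
      Real.rpow_add ht, Real.rpow_one]
    ring_nf
  have hmeas : MeasurableSet {y | ENNReal.ofReal (t / 2) < f y} :=
    measurableSet_lt measurable_const hf
  calc μ {x | t < (maximalFunction μ S f x).toReal} * ENNReal.ofReal (t ^ (q - 1))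
      ≤ ENNReal.ofReal (t / 2) * μ {x | 2 * ENNReal.ofReal (t / 2) < maximalFunction μ S f x} *
          ENNReal.ofReal (2 * t ^ (q - 2)) := by
        rw [hsplit, ← mul_assoc, mul_comm _ (ENNReal.ofReal (t / 2))]
        gcongr
    _ ≤ (∫⁻ x in {y | ENNReal.ofReal (t / 2) < f y}, f x ∂μ) *
          ENNReal.ofReal (2 * t ^ (q - 2)) := by
        gcongr
        exact mul_measure_lt_maximalFunction_le hweak hf _
    _ = ∫⁻ x, (if ENNReal.ofReal (t / 2) < f x then f x else 0) *
          ENNReal.ofReal (2 * t ^ (q - 2)) ∂μ := by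
        rw [← lintegral_indicator hmeas, ← lintegral_mul_const _ (hf.indicator hmeas)]
        simp only [Set.indicator_apply, mem_ofPred_eq]

lemma lintegral_maximalFunction_rpow_le_of_le [SFinite μ] [Countable ι]
    (hS : ∀ i, MeasurableSet (S i))
    (hweak : MaximalWeakTypeOneOne μ S)
    {q : ℝ} (hq : 1 < q) (hf : Measurable f) {L : ℝ≥0∞} (hL : L ≠ ⊤) (hfL : ∀ x, f x ≤ L) :
    ∫⁻ x, maximalFunction μ S f x ^ q ∂μ ≤
      ENNReal.ofReal (2 ^ q * q / (q - 1)) * ∫⁻ x, f x ^ q ∂μ := by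
  have hMtop : ∀ x, maximalFunction μ S f x ≠ ⊤ := fun x =>
    ((maximalFunction_le_of_le hfL x).trans_lt hL.lt_top).ne
  set G : ℝ → α → ℝ≥0∞ := fun t x =>
    (if ENNReal.ofReal (t / 2) < f x then f x else 0) * ENNReal.ofReal (2 * t ^ (q - 2))
  have hG : Measurable (Function.uncurry G) :=
    (Measurable.ite (measurableSet_lt (by fun_prop) (hf.comp measurable_snd))
      (hf.comp measurable_snd) measurable_const).mul (by fun_prop)
  calc ∫⁻ x, maximalFunction μ S f x ^ q ∂μ
      = ∫⁻ x, ENNReal.ofReal ((maximalFunction μ S f x).toReal ^ q) ∂μ := by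
        refine lintegral_congr fun x => ?_
        rw [← ENNReal.ofReal_rpow_of_nonneg ENNReal.toReal_nonneg (by linarith),
          ENNReal.ofReal_toReal (hMtop x)]
    _ = ENNReal.ofReal q * ∫⁻ t in Ioi 0,
          μ {x | t < (maximalFunction μ S f x).toReal} * ENNReal.ofReal (t ^ (q - 1)) :=
        lintegral_rpow_eq_lintegral_meas_lt_mul μ (ae_of_all _ fun _ => ENNReal.toReal_nonneg)
          (measurable_maximalFunction hS).ennreal_toReal.aemeasurable (by linarith)
    _ ≤ ENNReal.ofReal q * ∫⁻ t in Ioi 0, (∫⁻ x, G t x ∂μ) :=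
        mul_le_mul_right (setLIntegral_mono' measurableSet_Ioi fun t ht =>
          measure_lt_toReal_maximalFunction_mul_le hweak hf q ht) _
    _ = ENNReal.ofReal q * ∫⁻ x, (∫⁻ t in Ioi 0, G t x) ∂μ := by
        rw [lintegral_lintegral_swap hG.aemeasurable]
    _ = ENNReal.ofReal q * ∫⁻ x, ENNReal.ofReal (2 ^ q / (q - 1)) * f x ^ q ∂μ := by
        simp only [G, lintegral_Ioi_ite_mul_rpow hq ((hfL _).trans_lt hL.lt_top).ne]
    _ = ENNReal.ofReal (2 ^ q * q / (q - 1)) * ∫⁻ x, f x ^ q ∂μ := by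
        rw [lintegral_const_mul' _ _ ENNReal.ofReal_ne_top, ← mul_assoc,
          ← ENNReal.ofReal_mul (by linarith)]
        congr 2
        ring

theorem lintegral_maximalFunction_rpow_le [SFinite μ] [Countable ι]
    (hS : ∀ i, MeasurableSet (S i))
    (hweak : MaximalWeakTypeOneOne μ S)
    {q : ℝ} (hq : 1 < q) (hf : Measurable f) :
    ∫⁻ x, maximalFunction μ S f x ^ q ∂μ ≤
      ENNReal.ofReal (2 ^ q * q / (q - 1)) * ∫⁻ x, f x ^ q ∂μ := by
  have hq0 : 0 < q := by linarith
  set fn : ℕ → α → ℝ≥0∞ := fun n y => min (f y) n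
  have hmono : Monotone fn := fun m n hmn y => min_le_min_left _ (Nat.cast_le.2 hmn)
  have hsup : ∀ x, maximalFunction μ S f x ^ q = ⨆ n, maximalFunction μ S (fn n) x ^ q := by
    intro x
    rw [maximalFunction_eq_iSup_min hf]
    exact (ENNReal.orderIsoRpow q hq0).map_iSup _
  rw [lintegral_congr hsup, lintegral_iSup (fun n => (measurable_maximalFunction hS).pow_const q)
    fun m n hmn x => ENNReal.rpow_le_rpow (maximalFunction_mono (hmono hmn) x) hq0.le]
  refine iSup_le fun n => (lintegral_maximalFunction_rpow_le_of_le hS hweak hq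
    (hf.min measurable_const) (ENNReal.natCast_ne_top n) fun _ => min_le_right _ _).trans ?_
  gcongr with x
  exact min_le_left _ _

end Marcinkiewicz

section Product

variable {α β ι κ : Type*} [MeasurableSpace α] [MeasurableSpace β] {μ : Measure α} {ν : Measure β}
  [SFinite μ] [SFinite ν] {S : ι → Set α} {T : κ → Set β} {u : α × β → ℝ≥0∞}

lemma setLAverage_prod_le (hu : Measurable u) (A : Set α) (B : Set β) :
    ⨍⁻ z in A ×ˢ B, u z ∂μ.prod ν ≤ ⨍⁻ x in A, (⨍⁻ y in B, u (x, y) ∂ν) ∂μ := by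
  by_cases hAB : μ A = 0 ∨ ν B = 0
  · have h0 : μ.prod ν (A ×ˢ B) = 0 := by
      rw [Measure.prod_prod]; rcases hAB with h | h <;> simp [h]
    rw [setLAverage_eq, setLIntegral_measure_zero _ _ h0, ENNReal.zero_div]
    exact bot_le
  obtain ⟨hA, hB⟩ := not_or.1 hAB
  refine le_of_eq ?_
  simp only [setLAverage_eq, div_eq_mul_inv]
  rw [lintegral_mul_const' _ _ (ENNReal.inv_ne_top.2 hB), Measure.prod_prod,
    ← Measure.prod_restrict, lintegral_prod _ hu.aemeasurable,
    ENNReal.mul_inv (Or.inl hA) (Or.inr hB)]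
  ring

lemma maximalFunction_prod_le (hu : Measurable u) (z : α × β) :
    maximalFunction (μ.prod ν) (fun r : ι × κ => S r.1 ×ˢ T r.2) u z ≤
      maximalFunction μ S (fun x => maximalFunction ν T (fun y => u (x, y)) z.2) z.1 :=
  iSup₂_le fun _ hz => (setLAverage_prod_le hu _ _).trans <|
    (setLAverage_mono_ae _ (ae_of_all _ fun _ => setLAverage_le_maximalFunction hz.2)).trans
      (setLAverage_le_maximalFunction hz.1)

theorem lintegral_maximalFunction_prod_rpow_le [Countable ι] [Countable κ]
    (hS : ∀ i, MeasurableSet (S i)) (hT : ∀ j, MeasurableSet (T j)) {q : ℝ} (hq : 0 ≤ q)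
    {A B : ℝ≥0∞}
    (hSq : ∀ f : α → ℝ≥0∞, Measurable f →
      ∫⁻ x, maximalFunction μ S f x ^ q ∂μ ≤ A * ∫⁻ x, f x ^ q ∂μ)
    (hTq : ∀ g : β → ℝ≥0∞, Measurable g →
      ∫⁻ y, maximalFunction ν T g y ^ q ∂ν ≤ B * ∫⁻ y, g y ^ q ∂ν)
    (hu : Measurable u) :
    ∫⁻ z, maximalFunction (μ.prod ν) (fun r : ι × κ => S r.1 ×ˢ T r.2) u z ^ q ∂μ.prod ν ≤
      A * B * ∫⁻ z, u z ^ q ∂μ.prod ν := by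
  set w : α × β → ℝ≥0∞ := fun z => maximalFunction ν T (fun y => u (z.1, y)) z.2
  have hw : Measurable w := measurable_maximalFunction_prodMk_left hT hu
  have hMw : Measurable fun z : α × β => maximalFunction μ S (fun x => w (x, z.2)) z.1 :=
    (measurable_maximalFunction_prodMk_left hS (hw.comp measurable_swap)).comp measurable_swap
  calc ∫⁻ z, maximalFunction (μ.prod ν) (fun r : ι × κ => S r.1 ×ˢ T r.2) u z ^ q ∂μ.prod ν
      ≤ ∫⁻ z, maximalFunction μ S (fun x => w (x, z.2)) z.1 ^ q ∂μ.prod ν :=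
        lintegral_mono fun z => ENNReal.rpow_le_rpow (maximalFunction_prod_le hu z) hq
    _ = ∫⁻ y, ∫⁻ x, maximalFunction μ S (fun x => w (x, y)) x ^ q ∂μ ∂ν :=
        lintegral_prod_symm _ (hMw.pow_const q).aemeasurable
    _ ≤ ∫⁻ y, A * ∫⁻ x, w (x, y) ^ q ∂μ ∂ν :=
        lintegral_mono fun y => hSq _ (hw.comp measurable_prodMk_right)
    _ = A * ∫⁻ x, ∫⁻ y, w (x, y) ^ q ∂ν ∂μ := by
        rw [lintegral_const_mul _ ((hw.pow_const q).lintegral_prod_left'),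
          lintegral_lintegral_swap (f := fun y x => w (x, y) ^ q)
          ((hw.pow_const q).comp measurable_swap).aemeasurable]
    _ ≤ A * ∫⁻ x, B * ∫⁻ y, u (x, y) ^ q ∂ν ∂μ := by
        gcongr with x
        exact hTq _ (hu.comp measurable_prodMk_left)
    _ = A * B * ∫⁻ z, u z ^ q ∂μ.prod ν := by
        rw [lintegral_const_mul _ ((hu.pow_const q).lintegral_prod_right'), mul_assoc,
          lintegral_prod _ (hu.pow_const q).aemeasurable]

end Product

theorem lintegral_maximalFunction_dyadicR_rpow_le {q : ℝ} (hq : 1 < q) {u : ℝ × ℝ → ℝ≥0∞}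
    (hu : Measurable u) :
    ∫⁻ z, maximalFunction volume dyadicR u z ^ q ≤
      ENNReal.ofReal (2 ^ q * q / (q - 1)) * ENNReal.ofReal (2 ^ q * q / (q - 1)) *
        ∫⁻ z, u z ^ q := by
  have h := fun f (hf : Measurable f) => lintegral_maximalFunction_rpow_le
    (fun _ => measurableSet_Ico) maximalWeakTypeOneOne_dyadicI hq hf
  exact lintegral_maximalFunction_prod_rpow_le (μ := volume) (ν := volume) (S := dyadicI)
    (T := dyadicI) (fun _ => measurableSet_Ico) (fun _ => measurableSet_Ico) (by linarith) h h hu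

lemma ENNReal.le_rpow_of_le_mul_rpow {s q : ℝ} (hsq : s.HolderConjugate q) {X c : ℝ≥0∞}
    (hX : X ≠ ⊤) (h : X ≤ c * X ^ (1 / q)) : X ≤ c ^ s := by
  rcases eq_or_ne X 0 with rfl | h0
  · exact bot_le
  have hXq0 : X ^ (1 / q) ≠ 0 := (ENNReal.rpow_pos (pos_iff_ne_zero.2 h0) hX).ne'
  have hXqt : X ^ (1 / q) ≠ ⊤ := ENNReal.rpow_ne_top_of_nonneg (by simp [hsq.symm.nonneg]) hX
  have hsplit : X = X ^ (1 / s) * X ^ (1 / q) := by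
    rw [← ENNReal.rpow_add _ _ h0 hX, one_div, one_div, hsq.inv_add_inv_eq_one, ENNReal.rpow_one]
  have hroot : X ^ (1 / s) ≤ c := by
    rw [← ENNReal.mul_le_mul_iff_left hXq0 hXqt, ← hsplit]
    exact h
  calc X = (X ^ (1 / s)) ^ s := by rw [← ENNReal.rpow_mul, one_div_mul_cancel hsq.ne_zero,
        ENNReal.rpow_one]
    _ ≤ c ^ s := ENNReal.rpow_le_rpow hroot hsq.nonneg

lemma setLIntegral_le_lintegral_rpow_mul_measure {α : Type*} [MeasurableSpace α] {μ : Measure α}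
    {s q : ℝ} (hsq : s.HolderConjugate q) {f : α → ℝ≥0∞} (hf : Measurable f) (U : Set α) :
    ∫⁻ x in U, f x ∂μ ≤ (∫⁻ x, f x ^ q ∂μ) ^ (1 / q) * μ U ^ (1 / s) := by
  have h := ENNReal.lintegral_mul_le_Lp_mul_Lq (μ.restrict U) hsq.symm hf.aemeasurable
    (aemeasurable_const (b := (1 : ℝ≥0∞)))
  simp only [Pi.mul_apply, mul_one, ENNReal.one_rpow, lintegral_const, one_mul,
    Measure.restrict_apply_univ] at h
  refine h.trans ?_
  gcongr
  · exact one_div_nonneg.2 hsq.symm.nonneg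
  · exact Measure.restrict_le_self

section Sparse

variable {α ι : Type*} [MeasurableSpace α] {μ : Measure α} {S E : ι → Set α} {𝒞 : Finset ι}

lemma lintegral_sum_indicator_rpow_eq (hS : ∀ i, MeasurableSet (S i)) {s : ℝ} (hs : 1 ≤ s) :
    ∫⁻ x, (∑ i ∈ 𝒞, (S i).indicator 1 x) ^ s ∂μ =
      ∑ i ∈ 𝒞, ∫⁻ x in S i, (∑ j ∈ 𝒞, (S j).indicator 1 x) ^ (s - 1) ∂μ := by
  set F : α → ℝ≥0∞ := fun x => ∑ i ∈ 𝒞, (S i).indicator 1 x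
  have hF : Measurable F := Finset.measurable_sum _ fun i _ => measurable_const.indicator (hS i)
  have hpt : ∀ x, F x ^ s = ∑ i ∈ 𝒞, (S i).indicator (fun y => F y ^ (s - 1)) x := fun x => by
    calc F x ^ s = F x ^ (s - 1 + 1) := by rw [sub_add_cancel]
      _ = F x ^ (s - 1) * F x := by
          rw [ENNReal.rpow_add_of_nonneg _ _ (by linarith) zero_le_one, ENNReal.rpow_one]
      _ = ∑ i ∈ 𝒞, (S i).indicator (fun y => F y ^ (s - 1)) x := by
          rw [Finset.mul_sum]
          exact Finset.sum_congr rfl fun i _ => by simp [Set.indicator_apply]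
  rw [lintegral_congr hpt, lintegral_finsetSum _ fun i _ => (hF.pow_const _).indicator (hS i)]
  exact Finset.sum_congr rfl fun i _ => lintegral_indicator (hS i) _

lemma lintegral_sum_indicator_rpow_ne_top (hS : ∀ i, MeasurableSet (S i))
    (hfin : ∀ i ∈ 𝒞, μ (S i) ≠ ⊤) {s : ℝ} (hs : 1 ≤ s) :
    ∫⁻ x, (∑ i ∈ 𝒞, (S i).indicator 1 x) ^ s ∂μ ≠ ⊤ := by
  have hle : ∀ x, ∑ i ∈ 𝒞, (S i).indicator (1 : α → ℝ≥0∞) x ≤ 𝒞.card := fun x =>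
    (Finset.sum_le_card_nsmul 𝒞 (fun i => (S i).indicator 1 x) 1
      fun i _ => Set.indicator_apply_le' (fun _ => le_rfl) fun _ => zero_le_one).trans_eq
      (by simp)
  rw [lintegral_sum_indicator_rpow_eq hS hs]
  refine ENNReal.sum_ne_top.2 fun i hi =>
    ne_top_of_le_ne_top (b := (𝒞.card : ℝ≥0∞) ^ (s - 1) * μ (S i))
      (ENNReal.mul_ne_top (ENNReal.rpow_ne_top_of_nonneg (by linarith)
        (ENNReal.natCast_ne_top 𝒞.card)) (hfin i hi)) ?_
  rw [← setLIntegral_const]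
  exact lintegral_mono fun x => ENNReal.rpow_le_rpow (hle x) (by linarith)

lemma sum_setLIntegral_le_of_sparse {η : NNReal} (hη : η ≠ 0) (hfin : ∀ i ∈ 𝒞, μ (S i) ≠ ⊤)
    (hE : ∀ i ∈ 𝒞, MeasurableSet (E i)) (hES : ∀ i ∈ 𝒞, E i ⊆ S i)
    (hEη : ∀ i ∈ 𝒞, η * μ (S i) ≤ μ (E i)) (hdisj : (𝒞 : Set ι).PairwiseDisjoint E)
    (g : α → ℝ≥0∞) :
    ∑ i ∈ 𝒞, ∫⁻ x in S i, g x ∂μ ≤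
      (η : ℝ≥0∞)⁻¹ * ∫⁻ x in ⋃ i ∈ 𝒞, S i, maximalFunction μ S g x ∂μ := by
  have hterm : ∀ i ∈ 𝒞, ∫⁻ x in S i, g x ∂μ ≤
      (η : ℝ≥0∞)⁻¹ * ∫⁻ x in E i, maximalFunction μ S g x ∂μ := by
    intro i hi
    have hSE : μ (S i) ≤ (η : ℝ≥0∞)⁻¹ * μ (E i) :=
      (ENNReal.mul_le_iff_le_inv (by simpa using hη) ENNReal.coe_ne_top).1 (hEη i hi)
    calc ∫⁻ x in S i, g x ∂μ = μ (S i) * ⨍⁻ x in S i, g x ∂μ :=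
          (measure_mul_setLAverage _ (hfin i hi)).symm
      _ ≤ (η : ℝ≥0∞)⁻¹ * (μ (E i) * ⨍⁻ x in S i, g x ∂μ) := by rw [← mul_assoc]; gcongr
      _ = (η : ℝ≥0∞)⁻¹ * ∫⁻ _ in E i, ⨍⁻ y in S i, g y ∂μ ∂μ := by
          rw [setLIntegral_const, mul_comm (μ (E i))]
      _ ≤ (η : ℝ≥0∞)⁻¹ * ∫⁻ x in E i, maximalFunction μ S g x ∂μ := by
          gcongr _ * ?_
          exact setLIntegral_mono' (hE i hi) fun x hx =>
            setLAverage_le_maximalFunction (hES i hi hx)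
  calc ∑ i ∈ 𝒞, ∫⁻ x in S i, g x ∂μ
      ≤ ∑ i ∈ 𝒞, (η : ℝ≥0∞)⁻¹ * ∫⁻ x in E i, maximalFunction μ S g x ∂μ :=
        Finset.sum_le_sum hterm
    _ = (η : ℝ≥0∞)⁻¹ * ∫⁻ x in ⋃ i ∈ 𝒞, E i, maximalFunction μ S g x ∂μ := by
        rw [← Finset.mul_sum, lintegral_biUnion_finset hdisj hE]
    _ ≤ (η : ℝ≥0∞)⁻¹ * ∫⁻ x in ⋃ i ∈ 𝒞, S i, maximalFunction μ S g x ∂μ := by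
        gcongr _ * ?_
        exact lintegral_mono_set (iUnion₂_mono fun i hi => hES i hi)

theorem lintegral_sum_indicator_rpow_le_of_sparse [Countable ι] (hS : ∀ i, MeasurableSet (S i))
    {s q : ℝ} (hsq : s.HolderConjugate q) {A : ℝ≥0∞}
    (hM : ∀ g : α → ℝ≥0∞, Measurable g →
      ∫⁻ x, maximalFunction μ S g x ^ q ∂μ ≤ A * ∫⁻ x, g x ^ q ∂μ)
    {η : NNReal} (hη : η ≠ 0) (hfin : ∀ i ∈ 𝒞, μ (S i) ≠ ⊤)
    (hE : ∀ i ∈ 𝒞, MeasurableSet (E i)) (hES : ∀ i ∈ 𝒞, E i ⊆ S i)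
    (hEη : ∀ i ∈ 𝒞, η * μ (S i) ≤ μ (E i)) (hdisj : (𝒞 : Set ι).PairwiseDisjoint E) :
    ∫⁻ x, (∑ i ∈ 𝒞, (S i).indicator 1 x) ^ s ∂μ ≤
      ((η : ℝ≥0∞)⁻¹ * A ^ (1 / q)) ^ s * μ (⋃ i ∈ 𝒞, S i) := by
  set F : α → ℝ≥0∞ := fun x => ∑ i ∈ 𝒞, (S i).indicator 1 x
  set g : α → ℝ≥0∞ := fun x => F x ^ (s - 1)
  set U := ⋃ i ∈ 𝒞, S i
  have hg : Measurable g :=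
    (Finset.measurable_sum _ fun i _ => measurable_const.indicator (hS i)).pow_const _
  have hgq : ∫⁻ x, g x ^ q ∂μ = ∫⁻ x, F x ^ s ∂μ := by
    simp only [g, ← ENNReal.rpow_mul, hsq.sub_one_mul_conj]
  have hmain : ∫⁻ x, F x ^ s ∂μ ≤
      ((η : ℝ≥0∞)⁻¹ * A ^ (1 / q) * μ U ^ (1 / s)) * (∫⁻ x, F x ^ s ∂μ) ^ (1 / q) := by
    calc ∫⁻ x, F x ^ s ∂μ = ∑ i ∈ 𝒞, ∫⁻ x in S i, g x ∂μ :=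
          lintegral_sum_indicator_rpow_eq hS hsq.lt.le
      _ ≤ (η : ℝ≥0∞)⁻¹ * ∫⁻ x in U, maximalFunction μ S g x ∂μ :=
        sum_setLIntegral_le_of_sparse hη hfin hE hES hEη hdisj g
      _ ≤ (η : ℝ≥0∞)⁻¹ * ((∫⁻ x, maximalFunction μ S g x ^ q ∂μ) ^ (1 / q) * μ U ^ (1 / s)) :=
        mul_le_mul_right (setLIntegral_le_lintegral_rpow_mul_measure hsq
          (measurable_maximalFunction hS) U) _
      _ ≤ (η : ℝ≥0∞)⁻¹ * ((A * ∫⁻ x, F x ^ s ∂μ) ^ (1 / q) * μ U ^ (1 / s)) := by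
        rw [← hgq]
        gcongr
        · exact one_div_nonneg.2 hsq.symm.nonneg
        · exact hM g hg
      _ = ((η : ℝ≥0∞)⁻¹ * A ^ (1 / q) * μ U ^ (1 / s)) * (∫⁻ x, F x ^ s ∂μ) ^ (1 / q) := by
        rw [ENNReal.mul_rpow_of_nonneg _ _ (one_div_nonneg.2 hsq.symm.nonneg)]
        ring
  refine (ENNReal.le_rpow_of_le_mul_rpow hsq
    (lintegral_sum_indicator_rpow_ne_top hS hfin hsq.lt.le) hmain).trans_eq ?_
  rw [ENNReal.mul_rpow_of_nonneg _ _ hsq.nonneg, ← ENNReal.rpow_mul,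
    one_div_mul_cancel hsq.ne_zero, ENNReal.rpow_one]

end Sparse

lemma lintegral_ofReal_sum_indicator_rpow_le {α ι : Type*} [MeasurableSpace α] {μ : Measure α}
    (S : ι → Set α) (𝒞 : Finset ι) {p s : ℝ} (hp : 0 < p) (hps : p ≤ s) :
    ∫⁻ x, ENNReal.ofReal ((∑ i ∈ 𝒞, (S i).indicator 1 x) ^ p) ∂μ ≤
      ∫⁻ x, (∑ i ∈ 𝒞, (S i).indicator 1 x) ^ s ∂μ := by
  refine lintegral_mono fun x => ?_
  simp only [Set.indicator_apply, Pi.one_apply, Finset.sum_boole]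
  rw [← ENNReal.ofReal_rpow_of_nonneg (Nat.cast_nonneg _) hp.le, ENNReal.ofReal_natCast]
  rcases Nat.eq_zero_or_pos (𝒞.filter fun i => x ∈ S i).card with h | h
  · rw [h, Nat.cast_zero, ENNReal.zero_rpow_of_pos hp]
    exact bot_le
  · exact ENNReal.rpow_le_rpow_of_exponent_le (Nat.one_le_cast.2 h) hps

lemma ENNReal.rpow_two_mul_le_ofReal {K : ℝ≥0∞} (hK : K ≠ ⊤) {p : ℝ} (hp : 0 ≤ p) :
    K ^ (2 * p) ≤ ENNReal.ofReal ((K.toReal ^ 2 + 1) ^ p) := by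
  rw [← ENNReal.ofReal_toReal hK, ENNReal.ofReal_rpow_of_nonneg ENNReal.toReal_nonneg
    (by positivity), Real.rpow_mul ENNReal.toReal_nonneg, Real.rpow_two,
    ENNReal.toReal_ofReal ENNReal.toReal_nonneg]
  gcongr
  linarith

/-- **John–Nirenberg for sparse families.** If `𝒞` is a finite `η`-sparse family
of dyadic rectangles all contained in an open set `Ω`, then for `1 ≤ p < ∞`,
`‖Σ_{R∈𝒞} χ_R‖_{L^p} ≤ C(p,η) |Ω|^{1/p}` (stated with both sides raised to the power `p`). -/
theorem john_nirenberg_sparse (η : ℝ) (hη : 0 < η) (p : ℝ) (hp : 1 ≤ p) :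
    ∃ C : ℝ, 0 < C ∧
      ∀ (𝒞 : Finset RectIx) (E : RectIx → Set (ℝ × ℝ)),
        (∀ r ∈ 𝒞, MeasurableSet (E r)) →
        (∀ r ∈ 𝒞, E r ⊆ dyadicR r) →
        (∀ r ∈ 𝒞, ENNReal.ofReal (η * rlen r) ≤ volume (E r)) →
        (𝒞 : Set RectIx).PairwiseDisjoint E →
        ∀ Ω : Set (ℝ × ℝ), IsOpen Ω → (∀ r ∈ 𝒞, dyadicR r ⊆ Ω) →
        ∫⁻ z : ℝ × ℝ, ENNReal.ofReal ((∑ r ∈ 𝒞, (dyadicR r).indicator 1 z) ^ p) ∂volume ≤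
          ENNReal.ofReal (C ^ p) * volume Ω := by
  have hs : (2 * p).HolderConjugate (2 * p / (2 * p - 1)) := .conjExponent (by linarith)
  set q := 2 * p / (2 * p - 1)
  set A := ENNReal.ofReal (2 ^ q * q / (q - 1))
  set K := (ENNReal.ofReal η)⁻¹ * (A * A) ^ (1 / q)
  have hK : K ≠ ⊤ := by
    have : ENNReal.ofReal η ≠ 0 := by simpa using hη
    have := one_div_nonneg.2 hs.symm.nonneg
    finiteness
  refine ⟨K.toReal ^ 2 + 1, by positivity, fun 𝒞 E hE hES hEη hdisj Ω _ hΩ => ?_⟩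
  calc ∫⁻ z, ENNReal.ofReal ((∑ r ∈ 𝒞, (dyadicR r).indicator 1 z) ^ p)
      ≤ ∫⁻ z, (∑ r ∈ 𝒞, (dyadicR r).indicator 1 z) ^ (2 * p) :=
        lintegral_ofReal_sum_indicator_rpow_le _ _ (by linarith) (by linarith)
    _ ≤ K ^ (2 * p) * volume (⋃ r ∈ 𝒞, dyadicR r) :=
        lintegral_sum_indicator_rpow_le_of_sparse measurableSet_dyadicR hs
          (fun _ hg => lintegral_maximalFunction_dyadicR_rpow_le hs.symm.lt hg)
          (η := η.toNNReal) (by simpa using hη) (fun r _ => by simp [volume_dyadicR]) hE hES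
          (fun r hr => by
            rw [volume_dyadicR]
            exact (ENNReal.ofReal_mul hη.le).symm.trans_le (hEη r hr))
          hdisj
    _ ≤ ENNReal.ofReal ((K.toReal ^ 2 + 1) ^ p) * volume Ω :=
        mul_le_mul' (ENNReal.rpow_two_mul_le_ofReal hK (by linarith))
          (measure_mono (iUnion₂_subset hΩ))

end
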